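/- Let f = 1_{(0,1/2]} + 1_{(1,2]} and Δ = 1. Then for almost every u ∈ [0,1], g_{1;1}(u) = 1_{(0,1/2]}(u) and g_{0;1}(u) = 2·1_{(0,1/2]}(u) + 1_{(1/2,1]}(u); the autocorrelation at lag 1 is ρ(1) = γ_f(1)/γ_f(0) = 1/3; and ∫_0^1 ( g_{1;1}(u) − ρ(1) g_{0;1}(u) )² du = 1/9 > 0, so g_{1;1} − ρ(1) g_{0;1} is not almost everywhere zero. -/

import Mathlib

open MeasureTheory
open scoped ENNReal

/-- The autocovariance function of a moving average process with kernel `f`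
and driving Lévy process of variance `σ2`. -/
noncomputable def autocov (f : ℝ → ℝ) (σ2 : ℝ) (h : ℝ) : ℝ :=
  σ2 * ∫ s : ℝ, f (-s) * f (h - s)

/-- `g_{q;Δ}(u) = ∑_{k∈ℤ} f(u + kΔ) f(u + (k+q)Δ)`. -/
noncomputable def gper (f : ℝ → ℝ) (Δ : ℝ) (q : ℤ) (u : ℝ) : ℝ :=
  ∑' k : ℤ, f (u + (k : ℝ) * Δ) * f (u + ((k + q : ℤ) : ℝ) * Δ)

/-- The kernel `f = 1_{(0,1/2]} + 1_{(1,2]}` of Remark 3.5. -/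
noncomputable def exKernel (s : ℝ) : ℝ :=
  Set.indicator (Set.Ioc (0 : ℝ) (1 / 2)) (fun _ => (1 : ℝ)) s
    + Set.indicator (Set.Ioc (1 : ℝ) 2) (fun _ => (1 : ℝ)) s

/-! Since `f` is supported in `(0, 2]`, for `u ∈ (0, 1]` only `k = 0, 1` contribute to
`g_{q;1}(u)`, so both `g`'s are finite sums of indicators, evaluated by cases on `u`. After
`s ↦ -s` the autocovariance is `σ² ∫ f(s) f(s + h) ds`, and `f² = f`, `f(s) f(s + 1) = 1_{(0,1/2]}(s)`
give `γ(0) = 3σ²/2`, `γ(1) = σ²/2`. Then `g_{1;1} - g_{0;1}/3 = ±1/3` on all of `(0, 1]`. -/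

open Set

theorem gper_eq_sum_range {f : ℝ → ℝ} {Δ : ℝ} {n : ℕ}
    (hf : Function.support f ⊆ Ioc 0 (n * Δ)) (q : ℤ) {u : ℝ} (hu : u ∈ Ioc 0 Δ) :
    gper f Δ q u = ∑ k ∈ Finset.range n, f (u + k * Δ) * f (u + ((k + q : ℤ) : ℝ) * Δ) := by
  have hvanish : ∀ k : ℤ, k ∉ (Finset.range n).map Nat.castEmbedding → f (u + k * Δ) = 0 := by
    intro k hk
    refine Function.notMem_support.mp fun hmem => hk ?_
    obtain ⟨hpos, hle⟩ := hf hmem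
    have hk0 : 0 ≤ k := by
      by_contra! hneg
      have : (k : ℝ) ≤ -1 := by exact_mod_cast (by omega : k ≤ -1)
      nlinarith [hu.1, hu.2]
    have hkn : k < n := by
      by_contra! hge
      have : (n : ℝ) ≤ k := by exact_mod_cast hge
      nlinarith [hu.1, hu.2]
    lift k to ℕ using hk0
    simpa using hkn
  rw [gper, tsum_eq_sum fun k hk => by rw [hvanish k hk, zero_mul], Finset.sum_map]
  rfl

theorem autocov_eq_integral_mul_shift (f : ℝ → ℝ) (σ2 h : ℝ) :
    autocov f σ2 h = σ2 * ∫ s, f s * f (s + h) := by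
  rw [autocov, ← integral_neg_eq_self]
  simp only [neg_neg, sub_neg_eq_add, add_comm h]

theorem support_exKernel : Function.support exKernel ⊆ Ioc 0 2 := by
  intro x hx
  by_contra hout
  refine hx ?_
  simp only [mem_Ioc] at hout
  simp only [exKernel, indicator_apply, mem_Ioc]
  split_ifs <;> grind

theorem gper_exKernel (q : ℤ) {u : ℝ} (hu : u ∈ Ioc 0 1) :
    gper exKernel 1 q u
      = exKernel u * exKernel (u + q) + exKernel (u + 1) * exKernel (u + 1 + q) := by
  rw [gper_eq_sum_range (n := 2) (by simpa using support_exKernel) q hu]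
  simp [Finset.sum_range_succ, add_assoc]

theorem gper_exKernel_one {u : ℝ} (hu : u ∈ Ioc 0 1) :
    gper exKernel 1 1 u = (Ioc 0 (1 / 2)).indicator (fun _ => 1) u := by
  rw [gper_exKernel 1 hu]
  simp only [mem_Ioc] at hu
  simp only [exKernel, indicator_apply, mem_Ioc, Int.cast_one]
  split_ifs <;> grind

theorem gper_exKernel_zero {u : ℝ} (hu : u ∈ Ioc 0 1) :
    gper exKernel 1 0 u
      = 2 * (Ioc 0 (1 / 2)).indicator (fun _ => 1) u + (Ioc (1 / 2) 1).indicator (fun _ => 1) u := by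
  rw [gper_exKernel 0 hu]
  simp only [mem_Ioc] at hu
  simp only [exKernel, indicator_apply, mem_Ioc, Int.cast_zero, add_zero]
  split_ifs <;> grind

theorem exKernel_mul_self (s : ℝ) : exKernel s * exKernel s = exKernel s := by
  simp only [exKernel, indicator_apply, mem_Ioc]
  split_ifs <;> grind

theorem exKernel_mul_shift_one (s : ℝ) :
    exKernel s * exKernel (s + 1) = (Ioc (0 : ℝ) (1 / 2)).indicator 1 s := by
  simp only [exKernel, indicator_apply, mem_Ioc, Pi.one_apply]
  split_ifs <;> grind

theorem integral_indicator_Ioc_one {a b : ℝ} (hab : a ≤ b) :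
    ∫ s, (Ioc a b).indicator (1 : ℝ → ℝ) s = b - a := by
  rw [integral_indicator_one measurableSet_Ioc, Real.volume_real_Ioc_of_le hab]

theorem integrable_indicator_Ioc_one (a b : ℝ) :
    Integrable ((Ioc a b).indicator (1 : ℝ → ℝ)) :=
  (integrable_indicator_iff measurableSet_Ioc).2 (integrableOn_const measure_Ioc_lt_top.ne)

theorem autocov_exKernel_zero (σ2 : ℝ) : autocov exKernel σ2 0 = σ2 * (3 / 2) := by
  have hsplit : exKernel = (Ioc 0 (1 / 2)).indicator 1 + (Ioc 1 2).indicator 1 := rfl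
  rw [autocov_eq_integral_mul_shift]
  simp only [add_zero, exKernel_mul_self]
  rw [hsplit, integral_add' (integrable_indicator_Ioc_one _ _) (integrable_indicator_Ioc_one _ _),
    integral_indicator_Ioc_one (by norm_num), integral_indicator_Ioc_one (by norm_num)]
  norm_num

theorem autocov_exKernel_one (σ2 : ℝ) : autocov exKernel σ2 1 = σ2 * (1 / 2) := by
  rw [autocov_eq_integral_mul_shift]
  simp only [exKernel_mul_shift_one]
  rw [integral_indicator_Ioc_one (by norm_num)]
  norm_num

theorem autocorr_exKernel_one {σ2 : ℝ} (hσ2 : σ2 ≠ 0) :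
    autocov exKernel σ2 1 / autocov exKernel σ2 0 = 1 / 3 := by
  rw [autocov_exKernel_one, autocov_exKernel_zero, mul_div_mul_left _ _ hσ2]
  norm_num

theorem sq_gper_exKernel_sub {u : ℝ} (hu : u ∈ Ioc 0 1) :
    (gper exKernel 1 1 u - 1 / 3 * gper exKernel 1 0 u) ^ 2 = 1 / 9 := by
  rw [gper_exKernel_one hu, gper_exKernel_zero hu]
  simp only [mem_Ioc] at hu
  simp only [indicator_apply, mem_Ioc]
  split_ifs <;> grind

/-- for `f = 1_{(0,1/2]} + 1_{(1,2]}` and `Δ = 1`, almost everywhere on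
`[0,1]` we have `g_{1;1} = 1_{(0,1/2]}` and `g_{0;1} = 2·1_{(0,1/2]} + 1_{(1/2,1]}`,
the lag-one autocorrelation is `ρ(1) = 1/3`, and
`∫₀¹ (g_{1;1}(u) − ρ(1) g_{0;1}(u))² du = 1/9 > 0`, so that `g_{1;1} − ρ(1) g_{0;1}`
is not almost everywhere zero. -/
theorem statement10 (σ2 : ℝ) (hσ2 : 0 < σ2) :
    (∀ᵐ u ∂(volume.restrict (Set.Icc (0 : ℝ) 1)),
        gper exKernel 1 1 u = Set.indicator (Set.Ioc (0 : ℝ) (1 / 2)) (fun _ => (1 : ℝ)) u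
        ∧ gper exKernel 1 0 u
            = 2 * Set.indicator (Set.Ioc (0 : ℝ) (1 / 2)) (fun _ => (1 : ℝ)) u
              + Set.indicator (Set.Ioc (1 / 2 : ℝ) 1) (fun _ => (1 : ℝ)) u)
    ∧ autocov exKernel σ2 1 / autocov exKernel σ2 0 = 1 / 3
    ∧ (∫ u in Set.Ioc (0 : ℝ) 1,
          (gper exKernel 1 1 u
            - (autocov exKernel σ2 1 / autocov exKernel σ2 0) * gper exKernel 1 0 u) ^ 2)
        = 1 / 9
    ∧ ¬ (∀ᵐ u ∂(volume.restrict (Set.Icc (0 : ℝ) 1)),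
          gper exKernel 1 1 u
            - (autocov exKernel σ2 1 / autocov exKernel σ2 0) * gper exKernel 1 0 u = 0) := by
  have hρ := autocorr_exKernel_one hσ2.ne'
  have hIcc : volume.restrict (Icc (0 : ℝ) 1) = volume.restrict (Ioc 0 1) :=
    (Measure.restrict_congr_set Ioc_ae_eq_Icc).symm
  have hint : ∫ u in Ioc (0 : ℝ) 1, (gper exKernel 1 1 u - 1 / 3 * gper exKernel 1 0 u) ^ 2
      = 1 / 9 := by
    rw [setIntegral_congr_fun measurableSet_Ioc fun u hu => sq_gper_exKernel_sub hu,
      setIntegral_const, Real.volume_real_Ioc]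
    norm_num
  rw [hρ, hIcc]
  refine ⟨?_, rfl, hint, fun hzero => ?_⟩
  · filter_upwards [ae_restrict_mem measurableSet_Ioc] with u hu
    exact ⟨gper_exKernel_one hu, gper_exKernel_zero hu⟩
  · rw [integral_congr_ae (hzero.mono fun u hu => congrArg (· ^ 2) hu)] at hint
    norm_num at hint
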